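/- arXiv:2311.11763 — 5 statements merged into one kernel-verified Lean document; each statement's English description precedes it below -/
import Mathlib

section
/- Let L be a commutative ring, f, g ∈ L, let (φ, ψ) be a matrix factorization of f of size n and (φ', ψ') a matrix factorization of g of size m over L. Define the 2nm × 2nm block matrices E' = [[1ₙ ⊗ φ', ψ ⊗ 1ₘ], [φ ⊗ 1ₘ, −(1ₙ ⊗ ψ')]] and F' = [[1ₙ ⊗ ψ', ψ ⊗ 1ₘ], [φ ⊗ 1ₘ, −(1ₙ ⊗ φ')]]. Then E'·F' = (f + g)·I and F'·E' = (f + g)·I; that is, the first variant of the Yoshino tensor product is a matrix factorization of f + g of size 2nm. -/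
open Matrix Kronecker

/-
The product of the two block matrices has diagonal blocks `(1 ⊗ φ')(1 ⊗ ψ') + (ψ ⊗ 1)(φ ⊗ 1)
= g + f` and `(φ ⊗ 1)(ψ ⊗ 1) + (1 ⊗ ψ')(1 ⊗ φ') = f + g`, while its off-diagonal blocks are
commutators of a matrix of the form `A ⊗ 1` with one of the form `1 ⊗ B`, which vanish.
-/

namespace Matrix

def IsMatrixFactorization {ι R : Type*} [Fintype ι] [DecidableEq ι] [CommRing R] (f : R)
    (φ ψ : Matrix ι ι R) : Prop :=
  φ * ψ = f • 1 ∧ ψ * φ = f • 1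

theorem kronecker_one_commute_one_kronecker {ι κ R : Type*} [Fintype ι] [DecidableEq ι]
    [Fintype κ] [DecidableEq κ] [CommRing R] (A : Matrix ι ι R) (B : Matrix κ κ R) :
    Commute (A ⊗ₖ (1 : Matrix κ κ R)) ((1 : Matrix ι ι R) ⊗ₖ B) := by
  simp only [Commute, SemiconjBy, ← mul_kronecker_mul, Matrix.mul_one, Matrix.one_mul]

theorem fromBlocks_mul_fromBlocks_eq_smul_one {o R : Type*} [Fintype o] [DecidableEq o]
    [Ring R] {P Q S T : Matrix o o R} {e : R} (hPQ : Commute P Q) (hST : Commute S T)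
    (h₁ : P * T + Q * S = e • 1) (h₂ : S * Q + T * P = e • 1) :
    fromBlocks P Q S (-T) * fromBlocks T Q S (-P) = e • 1 := by
  simp only [fromBlocks_multiply, Matrix.mul_neg, Matrix.neg_mul, neg_neg, hPQ.eq, hST.eq, h₁,
    h₂, add_neg_cancel, ← fromBlocks_one, fromBlocks_smul, smul_zero]

variable {ι κ R : Type*} [Fintype ι] [DecidableEq ι] [Fintype κ] [DecidableEq κ] [CommRing R]

def yoshinoBlock (a b : Matrix ι ι R) (c d : Matrix κ κ R) :
    Matrix ((ι × κ) ⊕ (ι × κ)) ((ι × κ) ⊕ (ι × κ)) R :=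
  fromBlocks ((1 : Matrix ι ι R) ⊗ₖ c) (b ⊗ₖ (1 : Matrix κ κ R))
    (a ⊗ₖ (1 : Matrix κ κ R)) (-((1 : Matrix ι ι R) ⊗ₖ d))

theorem yoshinoBlock_mul_yoshinoBlock_swap {f g : R} {a b : Matrix ι ι R}
    {c d : Matrix κ κ R} (hab : IsMatrixFactorization f a b) (hcd : c * d = g • 1)
    (hdc : d * c = g • 1) :
    yoshinoBlock a b c d * yoshinoBlock a b d c = (f + g) • 1 := by
  refine fromBlocks_mul_fromBlocks_eq_smul_one (kronecker_one_commute_one_kronecker b c).symm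
    (kronecker_one_commute_one_kronecker a d) ?_ ?_ <;>
  simp only [← mul_kronecker_mul, Matrix.one_mul, hab.1, hab.2, hcd, hdc, smul_kronecker,
    kronecker_smul, one_kronecker_one, add_smul, add_comm]

theorem IsMatrixFactorization.yoshinoBlock {f g : R} {a b : Matrix ι ι R} {c d : Matrix κ κ R}
    (hab : IsMatrixFactorization f a b) (hcd : IsMatrixFactorization g c d) :
    IsMatrixFactorization (f + g) (yoshinoBlock a b c d) (yoshinoBlock a b d c) :=
  ⟨yoshinoBlock_mul_yoshinoBlock_swap hab hcd.1 hcd.2,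
    yoshinoBlock_mul_yoshinoBlock_swap hab hcd.2 hcd.1⟩

end Matrix

/-- The first variant of the Yoshino tensor product of a matrix factorization of `f`
and a matrix factorization of `g` is a matrix factorization of `f + g`. -/
theorem yoshino_tensor_product_first_variant_is_matrix_factorization
    {L : Type*} [CommRing L] (f g : L) (n m : ℕ)
    (φ ψ : Matrix (Fin n) (Fin n) L) (φ' ψ' : Matrix (Fin m) (Fin m) L)
    (hφψ : φ * ψ = f • (1 : Matrix (Fin n) (Fin n) L))
    (hψφ : ψ * φ = f • (1 : Matrix (Fin n) (Fin n) L))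
    (hφψ' : φ' * ψ' = g • (1 : Matrix (Fin m) (Fin m) L))
    (hψφ' : ψ' * φ' = g • (1 : Matrix (Fin m) (Fin m) L)) :
    Matrix.fromBlocks ((1 : Matrix (Fin n) (Fin n) L) ⊗ₖ φ') (ψ ⊗ₖ (1 : Matrix (Fin m) (Fin m) L))
        (φ ⊗ₖ (1 : Matrix (Fin m) (Fin m) L)) (-((1 : Matrix (Fin n) (Fin n) L) ⊗ₖ ψ')) *
      Matrix.fromBlocks ((1 : Matrix (Fin n) (Fin n) L) ⊗ₖ ψ') (ψ ⊗ₖ (1 : Matrix (Fin m) (Fin m) L))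
        (φ ⊗ₖ (1 : Matrix (Fin m) (Fin m) L)) (-((1 : Matrix (Fin n) (Fin n) L) ⊗ₖ φ')) =
      (f + g) • 1 ∧
    Matrix.fromBlocks ((1 : Matrix (Fin n) (Fin n) L) ⊗ₖ ψ') (ψ ⊗ₖ (1 : Matrix (Fin m) (Fin m) L))
        (φ ⊗ₖ (1 : Matrix (Fin m) (Fin m) L)) (-((1 : Matrix (Fin n) (Fin n) L) ⊗ₖ φ')) *
      Matrix.fromBlocks ((1 : Matrix (Fin n) (Fin n) L) ⊗ₖ φ') (ψ ⊗ₖ (1 : Matrix (Fin m) (Fin m) L))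
        (φ ⊗ₖ (1 : Matrix (Fin m) (Fin m) L)) (-((1 : Matrix (Fin n) (Fin n) L) ⊗ₖ ψ')) =
      (f + g) • 1 :=
  IsMatrixFactorization.yoshinoBlock ⟨hφψ, hψφ⟩ ⟨hφψ', hψφ'⟩
end

section
/- Let L be a commutative ring, f, g ∈ L, let (φ, ψ) be a matrix factorization of f of size n and (φ', ψ') a matrix factorization of g of size m over L. Define the 2nm × 2nm block matrices E''' = [[−(1ₙ ⊗ ψ'), φ ⊗ 1ₘ], [ψ ⊗ 1ₘ, 1ₙ ⊗ φ']] and F''' = [[−(1ₙ ⊗ φ'), φ ⊗ 1ₘ], [ψ ⊗ 1ₘ, 1ₙ ⊗ ψ']]. Then E'''·F''' = (f + g)·I and F'''·E''' = (f + g)·I; that is, the third variant of the Yoshino tensor product is a matrix factorization of f + g of size 2nm. -/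
open Matrix Kronecker

namespace Matrix

section CommSemiring

variable {R : Type*} [CommSemiring R] {ι κ : Type*} [DecidableEq ι] [DecidableEq κ]

theorem fromBlocks_smul_one (c : R) :
    fromBlocks (c • 1 : Matrix ι ι R) 0 0 (c • 1 : Matrix κ κ R) = c • 1 := by
  rw [← fromBlocks_one, fromBlocks_smul, smul_zero, smul_zero]

variable [Fintype ι] [Fintype κ]

theorem commute_kronecker_one_one_kronecker (A : Matrix ι ι R) (B : Matrix κ κ R) :
    Commute (A ⊗ₖ (1 : Matrix κ κ R)) ((1 : Matrix ι ι R) ⊗ₖ B) := by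
  simp only [Commute, SemiconjBy, ← mul_kronecker_mul, mul_one, one_mul]

theorem kronecker_one_mul_kronecker_one_eq_smul {A B : Matrix ι ι R} {f : R}
    (h : A * B = f • 1) : A ⊗ₖ (1 : Matrix κ κ R) * B ⊗ₖ 1 = f • 1 := by
  rw [← mul_kronecker_mul, h, mul_one, smul_kronecker, one_kronecker_one]

theorem one_kronecker_mul_one_kronecker_eq_smul {A B : Matrix κ κ R} {g : R}
    (h : A * B = g • 1) : (1 : Matrix ι ι R) ⊗ₖ A * 1 ⊗ₖ B = g • 1 := by
  rw [← mul_kronecker_mul, h, mul_one, kronecker_smul, one_kronecker_one]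

end CommSemiring

variable {R : Type*} [CommRing R] {ι κ : Type*} [Fintype ι] [Fintype κ] [DecidableEq ι]
  [DecidableEq κ]

/-- `E'''` is `yoshinoTensorThird φ ψ φ' ψ'` and `F'''` is `yoshinoTensorThird φ ψ ψ' φ'`. -/
def yoshinoTensorThird (φ ψ : Matrix ι ι R) (φ' ψ' : Matrix κ κ R) :
    Matrix ((ι × κ) ⊕ (ι × κ)) ((ι × κ) ⊕ (ι × κ)) R :=
  fromBlocks (-((1 : Matrix ι ι R) ⊗ₖ ψ')) (φ ⊗ₖ 1) (ψ ⊗ₖ 1) (1 ⊗ₖ φ')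

-- The off-diagonal blocks cancel because `X ⊗ 1` and `1 ⊗ Y` commute.
theorem yoshinoTensorThird_mul_yoshinoTensorThird_swap {f g : R}
    {φ ψ : Matrix ι ι R} {φ' ψ' : Matrix κ κ R}
    (hφψ : φ * ψ = f • 1) (hψφ : ψ * φ = f • 1)
    (hφψ' : φ' * ψ' = g • 1) (hψφ' : ψ' * φ' = g • 1) :
    yoshinoTensorThird φ ψ φ' ψ' * yoshinoTensorThird φ ψ ψ' φ' = (f + g) • 1 := by
  rw [yoshinoTensorThird, yoshinoTensorThird, fromBlocks_multiply, neg_mul_neg, neg_mul,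
    mul_neg, (commute_kronecker_one_one_kronecker φ ψ').eq,
    (commute_kronecker_one_one_kronecker ψ φ').eq, neg_add_cancel, neg_add_cancel,
    kronecker_one_mul_kronecker_one_eq_smul hφψ, kronecker_one_mul_kronecker_one_eq_smul hψφ,
    one_kronecker_mul_one_kronecker_eq_smul hφψ', one_kronecker_mul_one_kronecker_eq_smul hψφ',
    ← add_smul, add_comm g, ← add_smul, fromBlocks_smul_one]

end Matrix

/-- The third variant of the Yoshino tensor product of a matrix factorization of `f`
and a matrix factorization of `g` is a matrix factorization of `f + g`. -/
theorem yoshino_tensor_product_third_variant_is_matrix_factorization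
    {L : Type*} [CommRing L] (f g : L) (n m : ℕ)
    (φ ψ : Matrix (Fin n) (Fin n) L) (φ' ψ' : Matrix (Fin m) (Fin m) L)
    (hφψ : φ * ψ = f • (1 : Matrix (Fin n) (Fin n) L))
    (hψφ : ψ * φ = f • (1 : Matrix (Fin n) (Fin n) L))
    (hφψ' : φ' * ψ' = g • (1 : Matrix (Fin m) (Fin m) L))
    (hψφ' : ψ' * φ' = g • (1 : Matrix (Fin m) (Fin m) L)) :
    Matrix.fromBlocks (-((1 : Matrix (Fin n) (Fin n) L) ⊗ₖ ψ')) (φ ⊗ₖ (1 : Matrix (Fin m) (Fin m) L))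
        (ψ ⊗ₖ (1 : Matrix (Fin m) (Fin m) L)) ((1 : Matrix (Fin n) (Fin n) L) ⊗ₖ φ') *
      Matrix.fromBlocks (-((1 : Matrix (Fin n) (Fin n) L) ⊗ₖ φ')) (φ ⊗ₖ (1 : Matrix (Fin m) (Fin m) L))
        (ψ ⊗ₖ (1 : Matrix (Fin m) (Fin m) L)) ((1 : Matrix (Fin n) (Fin n) L) ⊗ₖ ψ') =
      (f + g) • 1 ∧
    Matrix.fromBlocks (-((1 : Matrix (Fin n) (Fin n) L) ⊗ₖ φ')) (φ ⊗ₖ (1 : Matrix (Fin m) (Fin m) L))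
        (ψ ⊗ₖ (1 : Matrix (Fin m) (Fin m) L)) ((1 : Matrix (Fin n) (Fin n) L) ⊗ₖ ψ') *
      Matrix.fromBlocks (-((1 : Matrix (Fin n) (Fin n) L) ⊗ₖ ψ')) (φ ⊗ₖ (1 : Matrix (Fin m) (Fin m) L))
        (ψ ⊗ₖ (1 : Matrix (Fin m) (Fin m) L)) ((1 : Matrix (Fin n) (Fin n) L) ⊗ₖ φ') =
      (f + g) • 1 :=
  ⟨yoshinoTensorThird_mul_yoshinoTensorThird_swap hφψ hψφ hφψ' hψφ',
    yoshinoTensorThird_mul_yoshinoTensorThird_swap hφψ hψφ hψφ' hφψ'⟩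
end

section
/- Let A be a commutative ring, f, g ∈ A, and let X⁰, X¹, Y⁰, Y¹ be A-modules equipped with A-linear maps d⁰_X : X⁰ → X¹, d¹_X : X¹ → X⁰, d⁰_Y : Y⁰ → Y¹, d¹_Y : Y¹ → Y⁰ satisfying d¹_X ∘ d⁰_X = f·id, d⁰_X ∘ d¹_X = f·id, d¹_Y ∘ d⁰_Y = g·id, d⁰_Y ∘ d¹_Y = g·id. Define A-linear maps D⁰ : (X⁰ ⊗ Y¹) ⊕ (X¹ ⊗ Y⁰) → (X¹ ⊗ Y¹) ⊕ (X⁰ ⊗ Y⁰) by D⁰(u, v) = ((d⁰_X ⊗ id)(u) + (id ⊗ d⁰_Y)(v), −(id ⊗ d¹_Y)(u) + (d¹_X ⊗ id)(v)), and D¹ : (X¹ ⊗ Y¹) ⊕ (X⁰ ⊗ Y⁰) → (X⁰ ⊗ Y¹) ⊕ (X¹ ⊗ Y⁰) by D¹(u, v) = ((d¹_X ⊗ id)(u) − (id ⊗ d⁰_Y)(v), (id ⊗ d¹_Y)(u) + (d⁰_X ⊗ id)(v)). Then D¹ ∘ D⁰ = (f + g)·id and D⁰ ∘ D¹ = (f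 + g)·id; that is, the Yoshino tensor product of the two factorizations is a factorization of f + g. -/
/-!
Every entry of `D¹ ∘ D⁰` and `D⁰ ∘ D¹` is a sum of composites `map a b ∘ map c d = map (a ∘ c) (b ∘ d)`.
On the diagonal these are `(d¹_X ∘ d⁰_X) ⊗ 1 = f` (or its mirror) and `1 ⊗ (d⁰_Y ∘ d¹_Y) = g`; off the
diagonal both terms fuse to the same `d_X ⊗ d_Y` and cancel because of the sign in `D⁰` or `D¹`.
-/

open TensorProduct

/-- The Yoshino tensor product of a factorization of `f` and a factorization of `g`
(given in module form) is a factorization of `f + g`. -/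
theorem yoshino_tensor_product_of_module_factorizations
    {A : Type*} [CommRing A] (f g : A)
    {X0 X1 Y0 Y1 : Type*}
    [AddCommGroup X0] [AddCommGroup X1] [AddCommGroup Y0] [AddCommGroup Y1]
    [Module A X0] [Module A X1] [Module A Y0] [Module A Y1]
    (dX0 : X0 →ₗ[A] X1) (dX1 : X1 →ₗ[A] X0)
    (dY0 : Y0 →ₗ[A] Y1) (dY1 : Y1 →ₗ[A] Y0)
    (hX0 : dX1 ∘ₗ dX0 = f • LinearMap.id)
    (hX1 : dX0 ∘ₗ dX1 = f • LinearMap.id)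
    (hY0 : dY1 ∘ₗ dY0 = g • LinearMap.id)
    (hY1 : dY0 ∘ₗ dY1 = g • LinearMap.id)
    (D0 : (X0 ⊗[A] Y1) × (X1 ⊗[A] Y0) →ₗ[A] (X1 ⊗[A] Y1) × (X0 ⊗[A] Y0))
    (D1 : (X1 ⊗[A] Y1) × (X0 ⊗[A] Y0) →ₗ[A] (X0 ⊗[A] Y1) × (X1 ⊗[A] Y0))
    (hD0 : ∀ u : X0 ⊗[A] Y1, ∀ v : X1 ⊗[A] Y0,
      D0 (u, v) =
        (TensorProduct.map dX0 LinearMap.id u + TensorProduct.map LinearMap.id dY0 v,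
         -(TensorProduct.map LinearMap.id dY1 u) + TensorProduct.map dX1 LinearMap.id v))
    (hD1 : ∀ u : X1 ⊗[A] Y1, ∀ v : X0 ⊗[A] Y0,
      D1 (u, v) =
        (TensorProduct.map dX1 LinearMap.id u - TensorProduct.map LinearMap.id dY0 v,
         TensorProduct.map LinearMap.id dY1 u + TensorProduct.map dX0 LinearMap.id v)) :
    D1 ∘ₗ D0 = (f + g) • LinearMap.id ∧ D0 ∘ₗ D1 = (f + g) • LinearMap.id := by
  refine ⟨LinearMap.ext fun ⟨u, v⟩ => ?_, LinearMap.ext fun ⟨u, v⟩ => ?_⟩ <;>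
  · simp only [LinearMap.comp_apply, hD0, hD1, map_add, map_neg, map_sub, map_map,
      LinearMap.comp_id, LinearMap.id_comp, hX0, hX1, hY0, hY1, map_smul_left, map_smul_right,
      map_id, LinearMap.add_apply, LinearMap.smul_apply, LinearMap.id_apply, Prod.smul_mk,
      Prod.mk_add_mk, Prod.mk.injEq, add_smul]
    constructor <;> abel
end

section
/- Let A be a commutative ring, M an A-module, E = Λ(M) the exterior algebra of M over A, and for i = 1,…,n let v_i ∈ M and φ_i : M → A be A-linear forms such that φ_j(v_i) = 0 whenever i ≠ j. Define the A-linear map D : E → E by D(y) = Σ_{i=1}^n (ι(v_i)·y + φ_i⌟y). Then D(D(y)) = (Σ_{i=1}^n φ_i(v_i))·y for every y ∈ E; that is, the Koszul-type differential D makes E a linear factorization of Σ_i φ_i(v_i). (This is the key computation showing that the unit object Δ_f, with v_i = (x_i − x'_i)θ_i and φ_i = ∂_i(f)θ_i*, is a matrix factorization of f(x) − f(x').) -/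
/-!
Since `v ↦ ι(v)·(-)` and `φ ↦ φ⌟(-)` are additive, `D` is the single operator
`ι(V)·(-) + Φ⌟(-)` with `V = Σᵢ vᵢ` and `Φ = Σᵢ φᵢ`. Its square is `Φ(V)` times the identity,
because `ι(V)² = 0`, `Φ⌟Φ⌟ = 0`, and the cross terms cancel by the derivation rule
`Φ⌟(ι(V)·y) = Φ(V)·y − ι(V)·(Φ⌟y)`. Orthogonality then reduces `Φ(V)` to `Σᵢ φᵢ(vᵢ)`.
-/

open CliffordAlgebra

namespace ExteriorAlgebra

variable {A M : Type*} [CommRing A] [AddCommGroup M] [Module A M]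

noncomputable def koszulMap (v : M) (φ : Module.Dual A M) :
    ExteriorAlgebra A M →ₗ[A] ExteriorAlgebra A M :=
  LinearMap.mul A _ (ι A v) + contractLeft (Q := (0 : QuadraticForm A M)) φ

theorem koszulMap_apply (v : M) (φ : Module.Dual A M) (y : ExteriorAlgebra A M) :
    koszulMap v φ y = ι A v * y + contractLeft (Q := (0 : QuadraticForm A M)) φ y :=
  rfl

theorem koszulMap_sum {ι : Type*} (s : Finset ι) (v : ι → M) (φ : ι → Module.Dual A M) :
    koszulMap (∑ i ∈ s, v i) (∑ i ∈ s, φ i) = ∑ i ∈ s, koszulMap (v i) (φ i) := by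
  simp only [koszulMap, map_sum, Finset.sum_add_distrib]

theorem koszulMap_koszulMap (v : M) (φ : Module.Dual A M) (y : ExteriorAlgebra A M) :
    koszulMap v φ (koszulMap v φ y) = φ v • y := by
  simp only [koszulMap_apply, map_add, ← mul_assoc, ι_sq_zero, zero_mul,
    contractLeft_ι_mul, contractLeft_contractLeft]
  abel

end ExteriorAlgebra

theorem LinearMap.sum_apply_sum_of_apply_eq_zero {R M N ι : Type*} [Semiring R]
    [AddCommMonoid M] [AddCommMonoid N] [Module R M] [Module R N] [Fintype ι]
    (f : ι → M →ₗ[R] N) (v : ι → M) (h : ∀ i j, i ≠ j → f j (v i) = 0) :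
    (∑ j, f j) (∑ i, v i) = ∑ i, f i (v i) := by
  rw [LinearMap.sum_apply]
  simp only [map_sum]
  exact Finset.sum_congr rfl fun j _ => Fintype.sum_eq_single j fun i hij => h i j hij

/-- On the exterior algebra `Λ(M)`, the Koszul-type map
`D(y) = Σᵢ (ι(vᵢ)·y + φᵢ⌟y)`, with `φⱼ(vᵢ) = 0` for `i ≠ j`, squares to
multiplication by `Σᵢ φᵢ(vᵢ)`: `(Λ(M), D)` is a linear factorization of
`Σᵢ φᵢ(vᵢ)`.  This is the key computation showing that the unit object `Δ_f`
is a matrix factorization of `f(x) − f(x')`. -/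
theorem koszul_sum_differential_squares_to_scalar
    {A M : Type*} [CommRing A] [AddCommGroup M] [Module A M] (n : ℕ)
    (v : Fin n → M) (φ : Fin n → Module.Dual A M)
    (hortho : ∀ i j : Fin n, i ≠ j → φ j (v i) = 0)
    (D : ExteriorAlgebra A M →ₗ[A] ExteriorAlgebra A M)
    (hD : ∀ y : ExteriorAlgebra A M,
      D y = ∑ i : Fin n, (ExteriorAlgebra.ι A (v i) * y +
        CliffordAlgebra.contractLeft (Q := (0 : QuadraticForm A M)) (φ i) y)) :
    ∀ y : ExteriorAlgebra A M, D (D y) = (∑ i : Fin n, φ i (v i)) • y := by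
  have hD_eq_koszulMap : D = ExteriorAlgebra.koszulMap (∑ i, v i) (∑ i, φ i) := by
    refine LinearMap.ext fun y => ?_
    rw [hD, ExteriorAlgebra.koszulMap_sum, LinearMap.sum_apply]
    rfl
  intro y
  rw [hD_eq_koszulMap, ExteriorAlgebra.koszulMap_koszulMap,
    LinearMap.sum_apply_sum_of_apply_eq_zero φ v hortho]
end

section
/- Let A and B be commutative rings, M an A-module, E = Λ(M) the exterior algebra of M over A, and let π₀ : E → A be the projection onto θ-degree 0 (Mathlib's algebraMapInv, the algebra map to A killing ι(M)). Let ε : A → B be a ring homomorphism, and for i = 1,…,n let v_i ∈ M and φ_i : M → A be A-linear forms such that ε(φ_i(w)) = 0 for all w ∈ M and all i. Define D : E → E by D(y) = Σ_{i=1}^n (ι(v_i)·y + φ_i⌟y) and π := ε ∘ π₀ : E → B. Then π(D(y)) = 0 for all y ∈ E; that is, π is a chain map from (E, D) to B equipped with the zero differential. (This is the statement that the canonical projection π : Δ_f → R, the composite of projection to θ-degree 0 with the multiplication map R ⊗ R → R, is a morphism of factorizations.) -/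
/-! `π₀` kills `ι(M)·Λ(M)`, and `π₀(φ⌟y)` always lies in the ideal `φ(M)` of `A`, which `ε` kills. -/

namespace ExteriorAlgebra

variable {R M : Type*} [CommRing R] [AddCommGroup M] [Module R M]

@[simp]
theorem algebraMapInv_ι (x : M) : algebraMapInv (ι R x) = 0 := by
  simp [algebraMapInv]

@[simp]
theorem algebraMapInv_ι_mul (x : M) (y : ExteriorAlgebra R M) :
    algebraMapInv (ι R x * y) = 0 := by
  rw [map_mul, algebraMapInv_ι, zero_mul]

theorem algebraMapInv_contractLeft_mem_range (d : Module.Dual R M) (y : ExteriorAlgebra R M) :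
    algebraMapInv (CliffordAlgebra.contractLeft (Q := (0 : QuadraticForm R M)) d y) ∈
      LinearMap.range d := by
  induction y using CliffordAlgebra.left_induction with
  | algebraMap r =>
    rw [CliffordAlgebra.contractLeft_algebraMap, map_zero]
    exact zero_mem _
  | add x y hx hy =>
    rw [map_add, map_add]
    exact add_mem hx hy
  | ι_mul x m _ =>
    rw [CliffordAlgebra.contractLeft_ι_mul, map_sub, map_smul, algebraMapInv_ι_mul, sub_zero,
      smul_eq_mul]
    exact Ideal.mul_mem_right _ _ (LinearMap.mem_range_self d m)

end ExteriorAlgebra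

/-- If `ε : A → B` kills every value of every linear form `φᵢ`, then the
composite `π = ε ∘ π₀` of the projection `π₀ : Λ(M) → A` to `θ`-degree `0` with
`ε` annihilates the image of the Koszul-type differential
`D(y) = Σᵢ (ι(vᵢ)·y + φᵢ⌟y)`; that is, `π` is a chain map from `(Λ(M), D)` to
`B` with the zero differential (the canonical projection `π : Δ_f → R` is a
morphism of factorizations). -/
theorem projection_is_chain_map
    {A B M : Type*} [CommRing A] [CommRing B] [AddCommGroup M] [Module A M]
    (ε : A →+* B) (n : ℕ)
    (v : Fin n → M) (φ : Fin n → Module.Dual A M)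
    (hφ : ∀ (i : Fin n) (w : M), ε (φ i w) = 0)
    (D : ExteriorAlgebra A M →ₗ[A] ExteriorAlgebra A M)
    (hD : ∀ y : ExteriorAlgebra A M,
      D y = ∑ i : Fin n, (ExteriorAlgebra.ι A (v i) * y +
        CliffordAlgebra.contractLeft (Q := (0 : QuadraticForm A M)) (φ i) y)) :
    ∀ y : ExteriorAlgebra A M, ε (ExteriorAlgebra.algebraMapInv (D y)) = 0 := by
  intro y
  rw [hD, map_sum, map_sum]
  refine Finset.sum_eq_zero fun i _ => ?_
  obtain ⟨w, hw⟩ := ExteriorAlgebra.algebraMapInv_contractLeft_mem_range (φ i) y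
  rw [map_add, ExteriorAlgebra.algebraMapInv_ι_mul, zero_add, ← hw, hφ]
end
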